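/- Let H ≤ F_p^×, μ = μ_H, and let k, δ, η be as in Proposition on finding Λ_δ (so δ < η/k², k ≥ 4, and ∑_ξ ν̂_k(ξ)² ≤ p^{2η}∑_{ξ∈Λ_δ}ν̂_k(ξ)²). Then p^{−10η} ∑_ξ ν̂_k(ξ)² ≤ ∑_{ξ,x∈F_p} ν̂_k(ξ)² ν̂_k(xξ)² ν_k(x). -/

import Mathlib

open Finset Complex
open scoped Classical BigOperators Pointwise

/-- The additive character `x ↦ e^{2πix/p}` on `ZMod p`. -/
noncomputable def ePsi (p : ℕ) (x : ZMod p) : ℂ :=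
  Complex.exp (2 * Real.pi * Complex.I * (x.val : ℂ) / (p : ℂ))

/-- Fourier transform of a (real) measure on `ZMod p`. -/
noncomputable def ft (p : ℕ) [NeZero p] (μ : ZMod p → ℝ) (ξ : ZMod p) : ℂ :=
  ∑ x : ZMod p, (μ x : ℂ) * ePsi p (x * ξ)

/-- Convolution of two functions on `ZMod p`. -/
noncomputable def cnv (p : ℕ) [NeZero p] (f g : ZMod p → ℝ) (x : ZMod p) : ℝ :=
  ∑ y : ZMod p, f y * g (x - y)

/-- `φ(x) = p · (μ ∗ μ⁻)(x)`. -/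
noncomputable def phiF (p : ℕ) [NeZero p] (μ : ZMod p → ℝ) (x : ZMod p) : ℝ :=
  (p : ℝ) * cnv p μ (fun y => μ (-y)) x

/-- `k`-fold convolution of `f` (0-fold is the Dirac mass at 0). -/
noncomputable def convIter (p : ℕ) [NeZero p] (f : ZMod p → ℝ) : ℕ → ZMod p → ℝ
  | 0 => fun x => if x = 0 then 1 else 0
  | n + 1 => cnv p f (convIter p f n)

/-- `ν_k`, the `k`-fold convolution of `ν = μ ∗ μ⁻`. -/
noncomputable def nuk (p : ℕ) [NeZero p] (μ : ZMod p → ℝ) (k : ℕ) : ZMod p → ℝ :=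
  convIter p (cnv p μ (fun y => μ (-y))) k

/-- `Λ_δ`, the set of large Fourier coefficients. -/
noncomputable def Lam (p : ℕ) [NeZero p] (μ : ZMod p → ℝ) (δ : ℝ) : Finset (ZMod p) :=
  Finset.univ.filter (fun ξ => (p : ℝ) ^ (-δ) < ‖ft p μ ξ‖)


/-! Because `|μ̂|` is constant on `H`-orbits, `ν̂_k(ξ) = ∑ₓ ν_k(x) μ̂(xξ)`, and Jensen's inequality
for the probability weights `ν_k` gives `ν̂_k(ξ)^{4k} ≤ ∑ₓ ν̂_k(xξ)² ν_k(x)`, since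
`ν̂_k = |μ̂|^{2k}`. On `Λ_δ` the left side is at least `p^{-8δk²} ≥ p^{-8η}`; weighting by
`ν̂_k(ξ)²` and summing over `Λ_δ`, which carries all but a factor `p^{2η}` of `∑ ν̂_k²`, gives
the claim. -/

section Fourier
variable {p : ℕ} [NeZero p]

lemma ePsi_eq_stdAddChar (x : ZMod p) : ePsi p x = ZMod.stdAddChar x := by
  rw [ZMod.stdAddChar_apply, ZMod.toCircle_apply]
  rfl

lemma ft_cnv (f g : ZMod p → ℝ) (ξ : ZMod p) :
    ft p (cnv p f g) ξ = ft p f ξ * ft p g ξ := by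
  simp only [ft, ePsi_eq_stdAddChar]
  rw [Finset.sum_mul_sum]
  simp only [cnv, Complex.ofReal_sum, Complex.ofReal_mul, Finset.sum_mul]
  rw [Finset.sum_comm]
  refine Finset.sum_congr rfl fun y _ => Fintype.sum_equiv (Equiv.subRight y) _ _ fun x => ?_
  have hψ : ZMod.stdAddChar (x * ξ) = ZMod.stdAddChar (y * ξ) * ZMod.stdAddChar ((x - y) * ξ) := by
    rw [← AddChar.map_add_eq_mul]; ring_nf
  rw [Equiv.subRight_apply, hψ]
  ring

lemma ft_convIter (f : ZMod p → ℝ) (n : ℕ) (ξ : ZMod p) :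
    ft p (convIter p f n) ξ = ft p f ξ ^ n := by
  induction n with
  | zero => rw [convIter, ft, Finset.sum_eq_single 0] <;> simp_all [ePsi_eq_stdAddChar]
  | succ n ih => rw [convIter, ft_cnv, ih, pow_succ']

lemma ft_comp_neg (f : ZMod p → ℝ) (ξ : ZMod p) :
    ft p (fun y => f (-y)) ξ = (starRingEnd ℂ) (ft p f ξ) := by
  simp only [ft, ePsi_eq_stdAddChar, map_sum, map_mul, Complex.conj_ofReal,
    ← AddChar.map_neg_eq_conj]
  exact Fintype.sum_equiv (Equiv.neg _) _ _ fun y => by simp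

lemma ft_nuk (μ : ZMod p → ℝ) (k : ℕ) (ξ : ZMod p) :
    ft p (nuk p μ k) ξ = ((‖ft p μ ξ‖ ^ (2 * k) : ℝ) : ℂ) := by
  rw [nuk, ft_convIter, ft_cnv, ft_comp_neg, Complex.mul_conj, Complex.normSq_eq_norm_sq, pow_mul]
  push_cast
  rfl

lemma norm_ft_nuk (μ : ZMod p → ℝ) (k : ℕ) (ξ : ZMod p) :
    ‖ft p (nuk p μ k) ξ‖ = ‖ft p μ ξ‖ ^ (2 * k) := by
  rw [ft_nuk, Complex.norm_real, Real.norm_of_nonneg (by positivity)]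

lemma sum_mul_ft_mul_eq_sum_mul_ft_mul (f g : ZMod p → ℝ) (ξ : ZMod p) :
    ∑ x, (f x : ℂ) * ft p g (x * ξ) = ∑ y, (g y : ℂ) * ft p f (y * ξ) := by
  simp only [ft, Finset.mul_sum]
  rw [Finset.sum_comm]
  refine Finset.sum_congr rfl fun y _ => Finset.sum_congr rfl fun x _ => ?_
  rw [show y * (x * ξ) = x * (y * ξ) by ring]
  ring

end Fourier

section Probability
variable {p : ℕ} [NeZero p] {μ : ZMod p → ℝ}

lemma sum_cnv (f g : ZMod p → ℝ) : ∑ x, cnv p f g x = (∑ x, f x) * ∑ x, g x := by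
  simp only [cnv]
  rw [Finset.sum_comm, Finset.sum_mul_sum]
  refine Finset.sum_congr rfl fun y _ => ?_
  rw [← Finset.mul_sum, ← Finset.mul_sum]
  exact congrArg _ (Equiv.sum_comp (Equiv.subRight y) g)

lemma nuk_nonneg (hμ : ∀ x, 0 ≤ μ x) (k : ℕ) (x : ZMod p) : 0 ≤ nuk p μ k x := by
  have hν : ∀ x, 0 ≤ cnv p μ (fun y => μ (-y)) x := fun x =>
    Finset.sum_nonneg fun y _ => mul_nonneg (hμ y) (hμ _)
  induction k generalizing x with
  | zero => unfold nuk convIter; split_ifs <;> norm_num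
  | succ k ih => exact Finset.sum_nonneg fun y _ => mul_nonneg (hν y) (ih _)

lemma sum_nuk (hμ : ∑ x, μ x = 1) (k : ℕ) : ∑ x, nuk p μ k x = 1 := by
  have hν : ∑ x, cnv p μ (fun y => μ (-y)) x = 1 := by
    rw [sum_cnv, Fintype.sum_equiv (Equiv.neg _) (fun x => μ (-x)) μ fun _ => rfl, hμ, one_mul]
  induction k with
  | zero => simp [nuk, convIter]
  | succ k ih => rw [nuk, convIter, sum_cnv, hν, ← nuk, ih, one_mul]

lemma ft_nuk_eq_sum_nuk_mul_ft (hμ : ∑ x, μ x = 1)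
    (hinv : ∀ y, μ y ≠ 0 → ∀ ξ, ‖ft p μ (y * ξ)‖ = ‖ft p μ ξ‖) (k : ℕ) (ξ : ZMod p) :
    ft p (nuk p μ k) ξ = ∑ x, (nuk p μ k x : ℂ) * ft p μ (x * ξ) := by
  have hdil : ∀ y, (μ y : ℂ) * ft p (nuk p μ k) (y * ξ) = μ y * ft p (nuk p μ k) ξ := by
    intro y
    by_cases hy : μ y = 0
    · simp [hy]
    · rw [ft_nuk, ft_nuk, hinv y hy]
  rw [sum_mul_ft_mul_eq_sum_mul_ft_mul, Finset.sum_congr rfl fun y _ => hdil y,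
    ← Finset.sum_mul, ← Complex.ofReal_sum, hμ, Complex.ofReal_one, one_mul]

lemma norm_ft_nuk_pow_le (hμ₀ : ∀ x, 0 ≤ μ x) (hμ : ∑ x, μ x = 1)
    (hinv : ∀ y, μ y ≠ 0 → ∀ ξ, ‖ft p μ (y * ξ)‖ = ‖ft p μ ξ‖) (k : ℕ) (ξ : ZMod p) :
    ‖ft p (nuk p μ k) ξ‖ ^ (4 * k)
      ≤ ∑ x, ‖ft p (nuk p μ k) (x * ξ)‖ ^ 2 * nuk p μ k x := by
  have hν₀ := nuk_nonneg hμ₀ k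
  have htri : ‖ft p (nuk p μ k) ξ‖ ≤ ∑ x, nuk p μ k x * ‖ft p μ (x * ξ)‖ := by
    rw [ft_nuk_eq_sum_nuk_mul_ft hμ hinv]
    refine (norm_sum_le _ _).trans_eq (Finset.sum_congr rfl fun x _ => ?_)
    rw [norm_mul, Complex.norm_real, Real.norm_of_nonneg (hν₀ x)]
  calc ‖ft p (nuk p μ k) ξ‖ ^ (4 * k)
      ≤ (∑ x, nuk p μ k x * ‖ft p μ (x * ξ)‖) ^ (4 * k) := by gcongr
    _ ≤ ∑ x, nuk p μ k x * ‖ft p μ (x * ξ)‖ ^ (4 * k) :=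
        Real.pow_arith_mean_le_arith_mean_pow _ _ _ (fun x _ => hν₀ x) (sum_nuk hμ k)
          (fun x _ => norm_nonneg _) _
    _ = ∑ x, ‖ft p (nuk p μ k) (x * ξ)‖ ^ 2 * nuk p μ k x := by
        refine Finset.sum_congr rfl fun x _ => ?_
        rw [norm_ft_nuk, ← pow_mul, mul_comm, show 2 * k * 2 = 4 * k by ring]

lemma rpow_le_norm_ft_nuk_pow_of_mem_Lam {δ : ℝ} {ξ : ZMod p} (hξ : ξ ∈ Lam p μ δ) (k : ℕ) :
    (p : ℝ) ^ (-δ * (8 * k ^ 2 : ℕ)) ≤ ‖ft p (nuk p μ k) ξ‖ ^ (4 * k) := by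
  rw [Real.rpow_mul_natCast (Nat.cast_nonneg p), norm_ft_nuk, ← pow_mul,
    show 2 * k * (4 * k) = 8 * k ^ 2 by ring]
  exact pow_le_pow_left₀ (by positivity) (Finset.mem_filter.1 hξ).2.le _

end Probability

section Subgroup
variable {p : ℕ} [NeZero p] (H : Subgroup (ZMod p)ˣ) {μ : ZMod p → ℝ}
  (hμ : ∀ x, μ x = if ∃ u ∈ H, ((u : (ZMod p)ˣ) : ZMod p) = x
        then 1 / (Nat.card H : ℝ) else 0)
include hμ

lemma uniform_subgroup_nonneg (x : ZMod p) : 0 ≤ μ x := by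
  rw [hμ]; split_ifs <;> positivity

lemma sum_uniform_subgroup : ∑ x, μ x = 1 := by
  have hsupp : Finset.univ.filter (fun x : ZMod p => ∃ u ∈ H, ((u : (ZMod p)ˣ) : ZMod p) = x)
      = Finset.univ.image fun u : H => ((u : (ZMod p)ˣ) : ZMod p) := by
    ext x; simp
  have hinj : Function.Injective fun u : H => ((u : (ZMod p)ˣ) : ZMod p) :=
    fun a b h => Subtype.ext (Units.ext h)
  simp only [hμ, ← Finset.sum_filter, Finset.sum_const, hsupp, Finset.card_image_of_injective _ hinj,
    Finset.card_univ, ← Nat.card_eq_fintype_card, nsmul_eq_mul]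
  field_simp [Nat.card_pos.ne']

lemma uniform_subgroup_unit_mul {u : (ZMod p)ˣ} (hu : u ∈ H) (x : ZMod p) :
    μ (u * x) = μ x := by
  rw [hμ, hμ]
  congr 1
  refine propext ⟨fun ⟨v, hv, hvx⟩ => ⟨u⁻¹ * v, mul_mem (inv_mem hu) hv, ?_⟩,
    fun ⟨v, hv, hvx⟩ => ⟨u * v, mul_mem hu hv, by simp [hvx]⟩⟩
  simp [hvx]

lemma ft_uniform_subgroup_mul {y : ZMod p} (hy : μ y ≠ 0) (ξ : ZMod p) :
    ft p μ (y * ξ) = ft p μ ξ := by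
  obtain ⟨u, hu, rfl⟩ : ∃ u ∈ H, ((u : (ZMod p)ˣ) : ZMod p) = y := by
    by_contra h
    exact hy (by rw [hμ, if_neg h])
  refine Fintype.sum_equiv u.mulLeft _ _ fun x => ?_
  simp only [Units.mulLeft_apply]
  rw [uniform_subgroup_unit_mul H hμ hu, mul_left_comm x, mul_assoc]

end Subgroup

lemma mul_sum_le_mul_sum_mul_of_le_on {ι : Type*} [Fintype ι] (s : Finset ι) {f g : ι → ℝ}
    {A c : ℝ} (hf : ∀ i, 0 ≤ f i) (hg : ∀ i, 0 ≤ g i) (hA : 0 ≤ A) (hc : 0 ≤ c)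
    (hs : ∑ i, f i ≤ A * ∑ i ∈ s, f i) (hcg : ∀ i ∈ s, c ≤ g i) :
    c * ∑ i, f i ≤ A * ∑ i, f i * g i :=
  calc c * ∑ i, f i ≤ A * ∑ i ∈ s, f i * c := by
        rw [← Finset.sum_mul]; nlinarith [hs]
    _ ≤ A * ∑ i ∈ s, f i * g i := by
        gcongr with i hi
        exacts [hf i, hcg i hi]
    _ ≤ A * ∑ i, f i * g i := by
        gcongr
        exacts [fun i _ _ => mul_nonneg (hf i) (hg i), Finset.subset_univ s]

theorem stmt15_general (p : ℕ) [Fact p.Prime] (H : Subgroup (ZMod p)ˣ)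
    (μ : ZMod p → ℝ)
    (hμ : ∀ x, μ x = if ∃ u ∈ H, ((u : (ZMod p)ˣ) : ZMod p) = x
        then 1 / (Nat.card H : ℝ) else 0)
    (k : ℕ) (hk : 4 ≤ k) (η δ : ℝ)
    (hδ : δ < η / (k : ℝ) ^ 2)
    (hsupp : ∑ ξ : ZMod p, ‖ft p (nuk p μ k) ξ‖ ^ 2
      ≤ (p : ℝ) ^ (2 * η) * ∑ ξ ∈ Lam p μ δ, ‖ft p (nuk p μ k) ξ‖ ^ 2) :
    (p : ℝ) ^ (-(10 * η)) * ∑ ξ : ZMod p, ‖ft p (nuk p μ k) ξ‖ ^ 2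
      ≤ ∑ ξ : ZMod p, ∑ x : ZMod p,
          ‖ft p (nuk p μ k) ξ‖ ^ 2 *
            ‖ft p (nuk p μ k) (x * ξ)‖ ^ 2 * nuk p μ k x := by
  have hp : (1 : ℝ) ≤ p := by exact_mod_cast (Fact.out : p.Prime).one_lt.le
  have hδη : δ * k ^ 2 ≤ η := ((lt_div_iff₀ (by positivity)).1 hδ).le
  have hΛ : ∀ ξ ∈ Lam p μ δ, (p : ℝ) ^ (-(8 * η))
      ≤ ∑ x, ‖ft p (nuk p μ k) (x * ξ)‖ ^ 2 * nuk p μ k x := fun ξ hξ =>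
    calc (p : ℝ) ^ (-(8 * η)) ≤ (p : ℝ) ^ (-δ * (8 * k ^ 2 : ℕ)) :=
          Real.rpow_le_rpow_of_exponent_le hp (by push_cast; linarith)
      _ ≤ _ := rpow_le_norm_ft_nuk_pow_of_mem_Lam hξ k
      _ ≤ _ := norm_ft_nuk_pow_le (uniform_subgroup_nonneg H hμ) (sum_uniform_subgroup H hμ)
          (fun y hy ξ => congrArg norm (ft_uniform_subgroup_mul H hμ hy ξ)) k ξ
  have hweighted := mul_sum_le_mul_sum_mul_of_le_on _ (fun ξ => by positivity)
    (fun ξ => Finset.sum_nonneg fun x _ => mul_nonneg (by positivity) (nuk_nonneg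
      (uniform_subgroup_nonneg H hμ) k x)) (by positivity) (by positivity) hsupp hΛ
  calc (p : ℝ) ^ (-(10 * η)) * ∑ ξ, ‖ft p (nuk p μ k) ξ‖ ^ 2
      = (p : ℝ) ^ (-(2 * η)) * ((p : ℝ) ^ (-(8 * η)) * ∑ ξ, ‖ft p (nuk p μ k) ξ‖ ^ 2) := by
        rw [← mul_assoc, ← Real.rpow_add (by positivity)]; ring_nf
    _ ≤ (p : ℝ) ^ (-(2 * η)) * ((p : ℝ) ^ (2 * η) * ∑ ξ, ‖ft p (nuk p μ k) ξ‖ ^ 2 *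
          ∑ x, ‖ft p (nuk p μ k) (x * ξ)‖ ^ 2 * nuk p μ k x) :=
        mul_le_mul_of_nonneg_left hweighted (by positivity)
    _ = _ := by
        rw [← mul_assoc, ← Real.rpow_add (by positivity), neg_add_cancel, Real.rpow_zero,
          one_mul]
        simp only [Finset.mul_sum, mul_assoc]

theorem stmt15 (p : ℕ) [Fact p.Prime] (H : Subgroup (ZMod p)ˣ)
    (μ : ZMod p → ℝ)
    (hμ : ∀ x, μ x = if ∃ u ∈ H, ((u : (ZMod p)ˣ) : ZMod p) = x
        then 1 / (Nat.card H : ℝ) else 0)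
    (k : ℕ) (hk : 4 ≤ k) (η δ : ℝ) (hη : 0 < η) (hδ0 : 0 < δ)
    (hδ : δ < η / (k : ℝ) ^ 2)
    (hsupp : ∑ ξ : ZMod p, ‖ft p (nuk p μ k) ξ‖ ^ 2
      ≤ (p : ℝ) ^ (2 * η) * ∑ ξ ∈ Lam p μ δ, ‖ft p (nuk p μ k) ξ‖ ^ 2) :
    (p : ℝ) ^ (-(10 * η)) * ∑ ξ : ZMod p, ‖ft p (nuk p μ k) ξ‖ ^ 2
      ≤ ∑ ξ : ZMod p, ∑ x : ZMod p,
          ‖ft p (nuk p μ k) ξ‖ ^ 2 *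
            ‖ft p (nuk p μ k) (x * ξ)‖ ^ 2 * nuk p μ k x :=
  stmt15_general p H μ hμ k hk η δ hδ hsupp
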